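/- Let λ ∈ (0,1) and θ ∈ (1,∞), and let c be the unique zero of f(c) = (c/((2θ−1+2cθ)(2−2θ−c(2θ−1))))^((1−θ)/(θ−1/2)) − (2θ−1+2cθ)²/(1−λ) in the interval ((1−θ)/θ, 0). Then the base B := c/((2θ−1+2cθ)(2−2θ−c(2θ−1))) satisfies B ∈ (0,1), the number s̄ := B^(1/(2θ−1)) satisfies 0 < s̄ < 1, and moreover −1 < c/s̄ < 0. -/
import Mathlib


open Real

theorem growth_optimal_sbar_welldefined_theta_gt_one
    (lam θ c B sbar : ℝ)
    (hlam : lam ∈ Set.Ioo (0:ℝ) 1) (hθ : θ ∈ Set.Ioi (1:ℝ))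
    (hcI : c ∈ Set.Ioo ((1 - θ)/θ) 0)
    (hfc : (c / ((2*θ - 1 + 2*c*θ) * (2 - 2*θ - c*(2*θ - 1)))) ^ ((1 - θ)/(θ - 1/2))
        - (2*θ - 1 + 2*c*θ)^2 / (1 - lam) = 0)
    (hB : B = c / ((2*θ - 1 + 2*c*θ) * (2 - 2*θ - c*(2*θ - 1))))
    (hsbar : sbar = B ^ (1/(2*θ - 1))) :
    B ∈ Set.Ioo (0:ℝ) 1 ∧ sbar ∈ Set.Ioo (0:ℝ) 1 ∧ c / sbar ∈ Set.Ioo (-1:ℝ) 0 := by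
  obtain ⟨hl0, hl1⟩ := hlam
  have hθ1 : (1:ℝ) < θ := hθ
  obtain ⟨hcl, hc0⟩ := hcI
  have hθpos : (0:ℝ) < θ := by linarith
  have hcθ : 1 - θ < c * θ := by
    have := (div_lt_iff₀ hθpos).mp hcl
    linarith
  set A := 2*θ - 1 + 2*c*θ with hAdef
  set D := 2 - 2*θ - c*(2*θ - 1) with hDdef
  have hA1 : 1 < A := by rw [hAdef]; nlinarith
  have hApos : 0 < A := by linarith
  have hDneg : D < 0 := by rw [hDdef]; nlinarith
  have h1c : 0 < 1 + c := by nlinarith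
  have hAD : A + D = 1 + c := by rw [hAdef, hDdef]; ring
  have hADneg : A * D < 0 := mul_neg_of_pos_of_neg hApos hDneg
  have hBpos : 0 < B := by
    rw [hB]
    exact div_pos_of_neg_of_neg hc0 hADneg
  rw [← hB] at hfc
  have hlam1 : 0 < 1 - lam := by linarith
  have hfc' : B ^ ((1 - θ)/(θ - 1/2)) = A^2/(1-lam) := by linarith
  have hRHS : 1 < A^2/(1-lam) := by
    rw [one_lt_div hlam1]; nlinarith
  have hB1 : B < 1 := by
    by_contra h
    push_neg at h
    have he : (1 - θ)/(θ - 1/2) ≤ 0 := by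
      apply div_nonpos_of_nonpos_of_nonneg <;> linarith
    have := Real.rpow_le_one_of_one_le_of_nonpos h he
    rw [hfc'] at this
    linarith
  have hexp : 0 < 1/(2*θ - 1) := by
    apply div_pos one_pos; linarith
  have hsb_pos : 0 < sbar := by rw [hsbar]; exact Real.rpow_pos_of_pos hBpos _
  have hsb1 : sbar < 1 := by
    rw [hsbar]
    exact Real.rpow_lt_one hBpos.le hB1 hexp
  have h2 : 2*θ - 1 ≠ 0 := by intro h; linarith
  have h3 : θ - 1/2 ≠ 0 := by intro h; linarith
  have hsplit : 1/(2*θ - 1) = 1 + (1 - θ)/(θ - 1/2) := by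
    have key : (1 - θ)/(θ - 1/2) = (2 - 2*θ)/(2*θ - 1) := by
      rw [div_eq_div_iff h3 h2]; ring
    rw [key, eq_comm, add_div' _ _ _ h2, div_eq_div_iff h2 h2]
    ring
  have hAne : A ≠ 0 := ne_of_gt hApos
  have hDne : D ≠ 0 := ne_of_lt hDneg
  have hlne : 1 - lam ≠ 0 := ne_of_gt hlam1
  have hcne : c ≠ 0 := ne_of_lt hc0
  have hsbar' : sbar = c * A / (D * (1 - lam)) := by
    rw [hsbar, hsplit, Real.rpow_add hBpos, Real.rpow_one, hfc', hB]
    field_simp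
  have hcs : c / sbar = D * (1 - lam) / A := by
    rw [hsbar']
    field_simp
  refine ⟨⟨hBpos, hB1⟩, ⟨hsb_pos, hsb1⟩, ?_, ?_⟩
  · rw [hcs, lt_div_iff₀ hApos]
    nlinarith [mul_pos (show (0:ℝ) < -D by linarith) hl0]
  · rw [hcs]
    exact div_neg_of_neg_of_pos (mul_neg_of_neg_of_pos hDneg hlam1) hApos
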